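/- Progress for expressions: Assume Σ;∅ ⊢ e : t (typing under the empty monomorphic environment) and that the definition list F is in accordance with the scheme environment Σ (written F ⋈ Σ). Then either e is a value, or there exists an expression e* such that F ⊢ e reduces in one step to e*. -/

import Mathlib

set_option autoImplicit true
set_option maxHeartbeats 1000000

namespace MiniErl

/-! ## Basic syntax: variables, constants, types -/

/-- Expression variables. -/
abbrev Var := String
/-- Type variables. -/
abbrev TyVar := String

/-- Constants: integers and floats (float literals represented abstractly by a code). -/
inductive Const where
  | int   : Int → Const
  | float : Int → Const
deriving DecidableEq

/-- Set-theoretic monomorphic types: unions, negations, arrows, products,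
type variables, singleton integer types, `Int`, and `Float`. -/
inductive Ty where
  | union : Ty → Ty → Ty
  | neg   : Ty → Ty
  | arrow : Ty → Ty → Ty
  | prod  : Ty → Ty → Ty
  | tvar  : TyVar → Ty
  | sing  : Int → Ty
  | int   : Ty
  | float : Ty
deriving DecidableEq

instance : Inhabited Ty := ⟨Ty.int⟩

namespace Ty
/-- Intersection, defined from union and negation. -/
def inter (t₁ t₂ : Ty) : Ty := .neg (.union (.neg t₁) (.neg t₂))
/-- Difference. -/
def diff (t₁ t₂ : Ty) : Ty := inter t₁ (.neg t₂)
/-- The empty type. -/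
def bot : Ty := inter .int .float
/-- The top type. -/
def top : Ty := .neg bot
end Ty

/-- The type of a constant: singleton type for integers, `Float` for floats. -/
def tyOfConst : Const → Ty
  | .int n => .sing n
  | .float _ => .float

/-! ## Semantic subtyping -/

/-- The semantic model: a domain of set-theoretic values
(constants, pairs, and finite graphs of functions). -/
inductive Dom where
  | const : Const → Dom
  | pair  : Dom → Dom → Dom
  | fn    : List (Dom × Option Dom) → Dom

/-- Interpretation of types as subsets of the model, relative to an
assignment of sets to type variables. -/
def den (η : TyVar → Set Dom) : Ty → Set Dom
  | .union t₁ t₂ => den η t₁ ∪ den η t₂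
  | .neg t => (den η t)ᶜ
  | .arrow t₁ t₂ =>
      { d | ∃ R, d = Dom.fn R ∧
            ∀ p ∈ R, p.1 ∈ den η t₁ → ∃ d', p.2 = some d' ∧ d' ∈ den η t₂ }
  | .prod t₁ t₂ =>
      { d | ∃ d₁ d₂, d = Dom.pair d₁ d₂ ∧ d₁ ∈ den η t₁ ∧ d₂ ∈ den η t₂ }
  | .tvar α => η α
  | .sing n => {Dom.const (Const.int n)}
  | .int => { d | ∃ n, d = Dom.const (Const.int n) }
  | .float => { d | ∃ n, d = Dom.const (Const.float n) }

/-- Semantic subtyping: set inclusion of interpretations under all assignments. -/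
def Subty (t₁ t₂ : Ty) : Prop := ∀ η, den η t₁ ⊆ den η t₂

/-- Semantic equivalence of types. -/
def TyEquiv (t₁ t₂ : Ty) : Prop := Subty t₁ t₂ ∧ Subty t₂ t₁

/-! ## Type substitutions -/

/-- Type substitutions (finite maps from type variables to types). -/
abbrev TySubst := List (TyVar × Ty)

def TySubst.find (θ : TySubst) (α : TyVar) : Option Ty :=
  (θ.find? (fun p => p.1 == α)).map (·.2)

def TySubst.dom (θ : TySubst) : Set TyVar := { α | (TySubst.find θ α).isSome }

/-- Application of a type substitution to a type. -/
def Ty.subst : Ty → TySubst → Ty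
  | .union t₁ t₂, θ => .union (t₁.subst θ) (t₂.subst θ)
  | .neg t, θ => .neg (t.subst θ)
  | .arrow t₁ t₂, θ => .arrow (t₁.subst θ) (t₂.subst θ)
  | .prod t₁ t₂, θ => .prod (t₁.subst θ) (t₂.subst θ)
  | .tvar α, θ => (TySubst.find θ α).getD (.tvar α)
  | .sing n, _ => .sing n
  | .int, _ => .int
  | .float, _ => .float

/-- The list of type variables occurring in a type. -/
def Ty.fvarsList : Ty → List TyVar
  | .union t₁ t₂ => t₁.fvarsList ++ t₂.fvarsList
  | .neg t => t.fvarsList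
  | .arrow t₁ t₂ => t₁.fvarsList ++ t₂.fvarsList
  | .prod t₁ t₂ => t₁.fvarsList ++ t₂.fvarsList
  | .tvar α => [α]
  | .sing _ => []
  | .int => []
  | .float => []

/-- The set of free type variables of a type. -/
def Ty.fvars (t : Ty) : Set TyVar := { α | α ∈ t.fvarsList }

/-- Free type variables of the range of a type substitution. -/
def TySubst.fvRange (θ : TySubst) : Set TyVar := { α | ∃ p ∈ θ, α ∈ p.2.fvarsList }

/-- Finite unions of types. -/
def unionList : List Ty → Ty
  | [] => Ty.bot
  | t :: ts => .union t (unionList ts)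

/-- Finite intersections of types. -/
def interList : List Ty → Ty
  | [] => Ty.top
  | t :: ts => Ty.inter t (interList ts)

/-! ## Guard types -/

/-- Guard types for dynamic type tests. -/
inductive GuardTy where
  | int | float | anyPair | anyFun
deriving DecidableEq

/-- The type corresponding to a guard type. -/
def GuardTy.toTy : GuardTy → Ty
  | .int => .int
  | .float => .float
  | .anyPair => .prod Ty.top Ty.top
  | .anyFun => .arrow Ty.bot Ty.top

end MiniErl

namespace MiniErl

/-! ## Expression syntax -/

mutual
/-- Expressions of MiniErl. -/
inductive Expr where
  | var   : Var → Expr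
  | const : Const → Expr
  | abs   : Var → Expr → Expr
  | app   : Expr → Expr → Expr
  | pair  : Expr → Expr → Expr
  | caseE : Expr → Branches → Expr

/-- Lists of pattern clauses of a case expression. -/
inductive Branches where
  | nil  : Branches
  | cons : GPat → Expr → Branches → Branches

/-- Patterns: values, wildcard, binding variables, bound (captured) variables, pairs. -/
inductive Pat where
  | val     : Expr → Pat
  | wild    : Pat
  | bind    : Var → Pat
  | capture : Var → Pat
  | pair    : Pat → Pat → Pat

/-- Guards: type tests on variables and on values, the oracle, true, conjunction. -/
inductive Guard where
  | isVar  : GuardTy → Var → Guard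
  | isVal  : GuardTy → Expr → Guard
  | oracle : Guard
  | tru    : Guard
  | and    : Guard → Guard → Guard

/-- Guarded patterns `p when g`. -/
inductive GPat where
  | mk : Pat → Guard → GPat
end

instance : Inhabited Expr := ⟨.const (.int 0)⟩
instance : Inhabited GPat := ⟨.mk .wild .tru⟩

/-- The pattern of a guarded pattern. -/
def GPat.pat : GPat → Pat
  | .mk p _ => p

/-- The guard of a guarded pattern. -/
def GPat.grd : GPat → Guard
  | .mk _ g => g

/-- The expression variables bound by a pattern. -/
def Pat.bound : Pat → List Var
  | .bind x => [x]
  | .pair p₁ p₂ => p₁.bound ++ p₂.bound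
  | _ => []

/-- The branches of a case expression, as a list of clauses. -/
def Branches.toList : Branches → List (GPat × Expr)
  | .nil => []
  | .cons pg e bs => (pg, e) :: bs.toList

/-! ## Value substitutions and substitution application -/

/-- Value substitutions: finite maps from expression variables to values. -/
abbrev VSubst := List (Var × Expr)

def VSubst.find (ς : VSubst) (x : Var) : Option Expr :=
  (ς.find? (fun p => p.1 == x)).map (·.2)

def VSubst.dom (ς : VSubst) : Set Var := { x | (VSubst.find ς x).isSome }

def VSubst.remove (ς : VSubst) (xs : List Var) : VSubst :=
  ς.filter (fun p => !xs.contains p.1)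

/-- Two substitutions are similar when they agree on shared variables. -/
def VSubst.Agree (ς₁ ς₂ : VSubst) : Prop :=
  ∀ x v₁ v₂, VSubst.find ς₁ x = some v₁ → VSubst.find ς₂ x = some v₂ → v₁ = v₂

mutual
/-- Applying a value substitution to an expression. -/
def substExpr : Expr → VSubst → Expr
  | .var x, ς => (VSubst.find ς x).getD (.var x)
  | .const c, _ => .const c
  | .abs x e, ς => .abs x (substExpr e (VSubst.remove ς [x]))
  | .app e₁ e₂, ς => .app (substExpr e₁ ς) (substExpr e₂ ς)
  | .pair e₁ e₂, ς => .pair (substExpr e₁ ς) (substExpr e₂ ς)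
  | .caseE e bs, ς => .caseE (substExpr e ς) (substBranches bs ς)

def substBranches : Branches → VSubst → Branches
  | .nil, _ => .nil
  | .cons pg e bs, ς =>
      .cons (substGPat pg ς)
        (substExpr e (VSubst.remove ς (Pat.bound (GPat.pat pg))))
        (substBranches bs ς)

def substPat : Pat → VSubst → Pat
  | .val v, ς => .val (substExpr v ς)
  | .wild, _ => .wild
  | .bind x, _ => .bind x
  | .capture x, _ => .capture x
  | .pair p₁ p₂, ς => .pair (substPat p₁ ς) (substPat p₂ ς)

def substGuard : Guard → VSubst → Guard
  | .isVar gt x, ς =>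
      match VSubst.find ς x with
      | some v => .isVal gt v
      | none => .isVar gt x
  | .isVal gt v, ς => .isVal gt (substExpr v ς)
  | .oracle, _ => .oracle
  | .tru, _ => .tru
  | .and g₁ g₂, ς => .and (substGuard g₁ ς) (substGuard g₂ ς)

def substGPat : GPat → VSubst → GPat
  | .mk p g, ς => .mk (substPat p ς) (substGuard g (VSubst.remove ς (Pat.bound p)))
end

mutual
/-- Free expression variables of an expression. -/
def fvExpr : Expr → List Var
  | .var x => [x]
  | .const _ => []
  | .abs x e => (fvExpr e).filter (fun y => y != x)
  | .app e₁ e₂ => fvExpr e₁ ++ fvExpr e₂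
  | .pair e₁ e₂ => fvExpr e₁ ++ fvExpr e₂
  | .caseE e bs => fvExpr e ++ fvBranches bs

def fvBranches : Branches → List Var
  | .nil => []
  | .cons pg e bs =>
      fvGPat pg ++ ((fvExpr e).filter (fun y => !(Pat.bound (GPat.pat pg)).contains y))
        ++ fvBranches bs

def fvPat : Pat → List Var
  | .val v => fvExpr v
  | .wild => []
  | .bind _ => []
  | .capture x => [x]
  | .pair p₁ p₂ => fvPat p₁ ++ fvPat p₂

def fvGuard : Guard → List Var
  | .isVar _ x => [x]
  | .isVal _ v => fvExpr v
  | .oracle => []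
  | .tru => []
  | .and g₁ g₂ => fvGuard g₁ ++ fvGuard g₂

def fvGPat : GPat → List Var
  | .mk p g => fvPat p ++ ((fvGuard g).filter (fun y => !(Pat.bound p).contains y))
end

/-! ## Values -/

/-- Values: constants, lambda abstractions, and pairs of values. -/
inductive IsValue : Expr → Prop where
  | const : IsValue (.const c)
  | abs   : IsValue (.abs x e)
  | pair  : IsValue v₁ → IsValue v₂ → IsValue (.pair v₁ v₂)

/-- A value matches a guard type. -/
inductive ValMatches : Expr → GuardTy → Prop where
  | int   : ValMatches (.const (.int n)) .int
  | float : ValMatches (.const (.float n)) .float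
  | pair  : ValMatches (.pair v₁ v₂) .anyPair
  | fn    : ValMatches (.abs x e) .anyFun

end MiniErl

namespace MiniErl

/-! ## Type schemes and environments -/

/-- Type schemes `∀ A. t`. A monomorphic type is identified with a scheme whose
variable list is empty. -/
structure Scheme where
  vars : List TyVar
  ty   : Ty

/-- Free type variables of a type scheme. -/
def Scheme.fvars (σ : Scheme) : Set TyVar := { α | α ∈ σ.ty.fvarsList ∧ α ∉ σ.vars }

/-- (Capture-avoiding) application of a type substitution to a scheme. -/
def Scheme.subst (σ : Scheme) (θ : TySubst) : Scheme :=
  ⟨σ.vars, σ.ty.subst (θ.filter (fun p => !σ.vars.contains p.1))⟩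

/-- Instances of a type scheme: substitute exactly the quantified variables. -/
def Scheme.Inst (σ : Scheme) (t : Ty) : Prop :=
  ∃ θ : TySubst, TySubst.dom θ = { α | α ∈ σ.vars } ∧ t = σ.ty.subst θ

/-- Generalization of a type scheme: a monomorphic type is generalized over
all its free type variables. -/
def Scheme.gen (σ : Scheme) : Scheme :=
  if σ.vars = [] then ⟨σ.ty.fvarsList, σ.ty⟩ else σ

/-- Monomorphic type environments. -/
abbrev TEnv := Var → Option Ty
/-- Scheme environments. -/
abbrev SEnv := Var → Option Scheme

def TEnv.empty : TEnv := fun _ => none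
def SEnv.empty : SEnv := fun _ => none

def TEnv.dom (Γ : TEnv) : Set Var := { x | (Γ x).isSome }
def SEnv.dom (S : SEnv) : Set Var := { x | (S x).isSome }

def TEnv.update (Γ : TEnv) (x : Var) (t : Ty) : TEnv :=
  fun y => if y = x then some t else Γ y

def TEnv.single (x : Var) (t : Ty) : TEnv :=
  fun y => if y = x then some t else none

def SEnv.single (x : Var) (σ : Scheme) : SEnv :=
  fun y => if y = x then some σ else none

/-- Intersection of type environments (pointwise type intersection on
shared variables, union of the domains). -/
def TEnv.inter (Γ₁ Γ₂ : TEnv) : TEnv := fun x =>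
  match Γ₁ x, Γ₂ x with
  | some t₁, some t₂ => some (Ty.inter t₁ t₂)
  | some t₁, none => some t₁
  | none, o => o

/-- Concatenation of type environments; bindings in the second take precedence. -/
def TEnv.append (Γ₁ Γ₂ : TEnv) : TEnv := fun x => (Γ₂ x).orElse (fun _ => Γ₁ x)

/-- Concatenation of scheme environments; bindings in the second take precedence. -/
def SEnv.append (S₁ S₂ : SEnv) : SEnv := fun x => (S₂ x).orElse (fun _ => S₁ x)

def concatSEnvs (l : List SEnv) : SEnv := l.foldl SEnv.append SEnv.empty

/-- Subtyping of type environments: equal domains and pointwise semantic subtyping. -/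
def TEnv.le (Γ' Γ : TEnv) : Prop :=
  (∀ x, (Γ' x).isSome ↔ (Γ x).isSome) ∧
  (∀ x t' t, Γ' x = some t' → Γ x = some t → Subty t' t)

/-- `Γ ≠ ⊥`: no variable is bound to an empty type. -/
def TEnv.ok (Γ : TEnv) : Prop := ∀ x t, Γ x = some t → ¬ Subty t Ty.bot

/-- Pointwise application of a type substitution to a type environment. -/
def TEnv.subst (Γ : TEnv) (θ : TySubst) : TEnv := fun x => (Γ x).map (·.subst θ)

/-- Pointwise application of a type substitution to a scheme environment. -/
def SEnv.subst (S : SEnv) (θ : TySubst) : SEnv := fun x => (S x).map (·.subst θ)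

/-- Pointwise generalization of a scheme environment. -/
def SEnv.gen (S : SEnv) : SEnv := fun x => (S x).map Scheme.gen

/-! ## Top-level definitions and programs -/

/-- Top-level definitions: `x = λy.e`, optionally with a type-scheme annotation. -/
inductive Defn where
  | plain : Var → Var → Expr → Defn
  | ann   : Var → Scheme → Var → Expr → Defn

def Defn.name : Defn → Var
  | .plain x _ _ => x
  | .ann x _ _ _ => x

def Defn.lam : Defn → Expr
  | .plain _ y e => .abs y e
  | .ann _ _ y e => .abs y e

/-- Lookup of a letrec-bound variable in a definition list. -/
def lookupF (F : List Defn) (x : Var) : Option Expr :=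
  (F.find? (fun d => d.name == x)).map Defn.lam

def domF (F : List Defn) : Set Var := { x | (lookupF F x).isSome }

/-- Programs: mutually recursive top-level definitions with a main expression. -/
structure Program where
  defs : List Defn
  main : Expr

/-! ## Dynamic semantics -/

/-- Evaluation of guards (the oracle may evaluate to anything). -/
inductive EvalGuard (F : List Defn) : Guard → Bool → Prop where
  | isValT : ValMatches v gt → EvalGuard F (.isVal gt v) true
  | isValF : ¬ ValMatches v gt → EvalGuard F (.isVal gt v) false
  | isVarT : lookupF F x = some v → ValMatches v gt → EvalGuard F (.isVar gt x) true
  | isVarF : (∀ v, lookupF F x = some v → ¬ ValMatches v gt) →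
      EvalGuard F (.isVar gt x) false
  | oracle : ∀ b, EvalGuard F .oracle b
  | tru    : EvalGuard F .tru true
  | and    : EvalGuard F g₁ b₁ → EvalGuard F g₂ b₂ → EvalGuard F (.and g₁ g₂) (b₁ && b₂)

/-- Matching a value against a pattern, yielding a substitution or `none` (fail). -/
inductive MatchP (F : List Defn) : Expr → Pat → Option VSubst → Prop where
  | valEq : MatchP F v (.val v) (some [])
  | valNe : v ≠ v' → MatchP F v (.val v') none
  | wild : MatchP F v .wild (some [])
  | bind : MatchP F v (.bind x) (some [(x, v)])
  | capture : lookupF F x = some v' → MatchP F v (.val v') r → MatchP F v (.capture x) r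
  | pairSome : MatchP F v₁ p₁ (some ς₁) → MatchP F v₂ p₂ (some ς₂) →
      VSubst.Agree ς₁ ς₂ → MatchP F (.pair v₁ v₂) (.pair p₁ p₂) (some (ς₁ ++ ς₂))
  | pairNotPair : (∀ v₁ v₂, v ≠ Expr.pair v₁ v₂) → MatchP F v (.pair p₁ p₂) none
  | pairFail₁ : MatchP F v₁ p₁ none → MatchP F (.pair v₁ v₂) (.pair p₁ p₂) none
  | pairFail₂ : MatchP F v₂ p₂ none → MatchP F (.pair v₁ v₂) (.pair p₁ p₂) none
  | pairDisagree : MatchP F v₁ p₁ (some ς₁) → MatchP F v₂ p₂ (some ς₂) →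
      ¬ VSubst.Agree ς₁ ς₂ → MatchP F (.pair v₁ v₂) (.pair p₁ p₂) none

/-- Matching a value against a guarded pattern. -/
inductive MatchG (F : List Defn) : Expr → GPat → Option VSubst → Prop where
  | patFail : MatchP F v p none → MatchG F v (.mk p g) none
  | guardFalse : MatchP F v p (some ς) → EvalGuard F (substGuard g ς) false →
      MatchG F v (.mk p g) none
  | guardTrue : MatchP F v p (some ς) → EvalGuard F (substGuard g ς) true →
      MatchG F v (.mk p g) (some ς)

/-- First-match reduction of a value against the branches of a case expression. -/
inductive CaseRed (F : List Defn) (v : Expr) : Branches → Expr → Prop where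
  | here  : MatchG F v pg (some ς) → CaseRed F v (.cons pg e bs) (substExpr e ς)
  | there : MatchG F v pg none → CaseRed F v bs e' → CaseRed F v (.cons pg e bs) e'

/-- Call-by-value small-step reduction of expressions under definitions `F`. -/
inductive Step (F : List Defn) : Expr → Expr → Prop where
  | beta : IsValue v → Step F (.app (.abs x e) v) (substExpr e [(x, v)])
  | var : lookupF F x = some v → Step F (.var x) v
  | caseMatch : IsValue v → CaseRed F v bs e' → Step F (.caseE v bs) e'
  | appL : Step F e₁ e₁' → Step F (.app e₁ e₂) (.app e₁' e₂)
  | appR : IsValue v → Step F e e' → Step F (.app v e) (.app v e')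
  | pairL : Step F e₁ e₁' → Step F (.pair e₁ e₂) (.pair e₁' e₂)
  | pairR : IsValue v → Step F e e' → Step F (.pair v e) (.pair v e')
  | caseScrut : Step F e e' → Step F (.caseE e bs) (.caseE e' bs)

/-- One-step reduction of programs: reduce the main expression under fixed definitions. -/
inductive StepProg : Program → Program → Prop where
  | mk : Step F e e' → StepProg ⟨F, e⟩ ⟨F, e'⟩

end MiniErl

namespace MiniErl

/-! ## Static semantics of guarded patterns -/

/-- The guard environment `env(g)`. -/
def Guard.env : Guard → TEnv
  | .isVar gt x => TEnv.single x gt.toTy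
  | .isVal _ _ => TEnv.empty
  | .oracle => TEnv.empty
  | .tru => TEnv.empty
  | .and g₁ g₂ => TEnv.inter (Guard.env g₁) (Guard.env g₂)

/-- `safe↑(g)`: the guard may possibly succeed. -/
def Guard.safeUp : Guard → Prop
  | .isVar _ _ => True
  | .isVal gt v => ValMatches v gt
  | .oracle => True
  | .tru => True
  | .and g₁ g₂ => Guard.safeUp g₁ ∧ Guard.safeUp g₂

/-- `safe↓(g, X)`: the guard always succeeds for the variables in `X`. -/
def Guard.safeDown (X : Set Var) : Guard → Prop
  | .isVar _ x => x ∈ X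
  | .isVal gt v => ValMatches v gt
  | .oracle => False
  | .tru => True
  | .and g₁ g₂ => Guard.safeDown X g₁ ∧ Guard.safeDown X g₂

/-- Potential type of a pattern with respect to a (guard) environment. -/
def patUp (Γ : TEnv) : Pat → Ty
  | .val (.const c) => tyOfConst c
  | .val _ => Ty.top
  | .wild => Ty.top
  | .bind x => (Γ x).getD Ty.top
  | .capture _ => Ty.top
  | .pair p₁ p₂ => .prod (patUp Γ p₁) (patUp Γ p₂)

/-- Accepting type of a pattern with respect to a (guard) environment. -/
def patDown (Γ : TEnv) : Pat → Ty
  | .val (.const (.int n)) => .sing n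
  | .val _ => Ty.bot
  | .wild => Ty.top
  | .bind x => (Γ x).getD Ty.top
  | .capture _ => Ty.bot
  | .pair p₁ p₂ => .prod (patDown Γ p₁) (patDown Γ p₂)

open Classical in
/-- Potential type `⌈pg⌉` of a guarded pattern: every expression matching
`pg` has this type. -/
noncomputable def GPat.up : GPat → Ty
  | .mk p g =>
      if Guard.safeUp g ∧ TEnv.ok (Guard.env g) then patUp (Guard.env g) p else Ty.bot

open Classical in
/-- Accepting type `⌊pg⌋` of a guarded pattern: every expression of this type
matches `pg`. -/
noncomputable def GPat.down : GPat → Ty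
  | .mk p g =>
      if Guard.safeDown { x | x ∈ p.bound } g ∧ TEnv.ok (Guard.env g) ∧ p.bound.Nodup
      then patDown (Guard.env g) p else Ty.bot

/-- `t₁` and `t₂` are the (left and right) projections of a product type `t`:
the least pair of types (w.r.t. semantic subtyping) such that `t ≤ t₁ × t₂`. -/
def IsProj (t t₁ t₂ : Ty) : Prop :=
  Subty t (.prod t₁ t₂) ∧ ∀ u₁ u₂, Subty t (.prod u₁ u₂) → Subty t₁ u₁ ∧ Subty t₂ u₂

/-- The pattern environment `t // p` obtained by matching a pattern against a type. -/
inductive PatEnv : Ty → Pat → TEnv → Prop where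
  | val : PatEnv t (.val v) TEnv.empty
  | wild : PatEnv t .wild TEnv.empty
  | capture : PatEnv t (.capture x) TEnv.empty
  | bind : PatEnv t (.bind x) (TEnv.single x t)
  | pair : IsProj t t₁ t₂ → PatEnv t₁ p₁ Γ₁ → PatEnv t₂ p₂ Γ₂ →
      PatEnv t (.pair p₁ p₂) (TEnv.inter Γ₁ Γ₂)

/-- The pattern environment `t // pg` obtained by matching a guarded pattern
against a type. -/
inductive GPatEnv : Ty → GPat → TEnv → Prop where
  | mk : PatEnv t p Γ → GPatEnv t (.mk p g) (TEnv.inter Γ (Guard.env g))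

/-! ## The declarative type system -/

/-- The declarative typing judgment `Σ; Γ ⊢ e : t`. -/
inductive HasTy (S : SEnv) : TEnv → Expr → Ty → Prop where
  | var : ∀ {Γ : TEnv} {x t},
      Γ x = some t → S x = none → HasTy S Γ (.var x) t
  | varPoly : ∀ {Γ : TEnv} {x σ t},
      S x = some σ → Γ x = none → Scheme.Inst σ t → HasTy S Γ (.var x) t
  | const : ∀ {Γ : TEnv} {c}, HasTy S Γ (.const c) (tyOfConst c)
  | abs : ∀ {Γ : TEnv} {x e t₁ t₂},
      HasTy S (TEnv.update Γ x t₁) e t₂ → HasTy S Γ (.abs x e) (.arrow t₁ t₂)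
  | app : ∀ {Γ : TEnv} {e₁ e₂ t' t},
      HasTy S Γ e₁ (.arrow t' t) → HasTy S Γ e₂ t' → HasTy S Γ (.app e₁ e₂) t
  | pair : ∀ {Γ : TEnv} {e₁ e₂ t₁ t₂},
      HasTy S Γ e₁ t₁ → HasTy S Γ e₂ t₂ → HasTy S Γ (.pair e₁ e₂) (.prod t₁ t₂)
  | sub : ∀ {Γ : TEnv} {e t' t},
      HasTy S Γ e t' → Subty t' t → HasTy S Γ e t
  | hcase : ∀ {Γ : TEnv} {e : Expr} {bs : Branches} {t : Ty}
      (inT outT : ℕ → Ty) (Gp : ℕ → TEnv),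
      HasTy S Γ e t →
      Subty t (unionList (bs.toList.map (fun b => GPat.down b.1))) →
      (∀ i (hi : i < bs.toList.length),
        { x | x ∈ fvGPat (bs.toList.get ⟨i, hi⟩).1 } ⊆ SEnv.dom S ∪ TEnv.dom Γ) →
      (∀ i (hi : i < bs.toList.length),
        inT i = Ty.inter
          (Ty.diff t (unionList ((bs.toList.take i).map (fun b => GPat.down b.1))))
          (GPat.up (bs.toList.get ⟨i, hi⟩).1)) →
      (∀ i (hi : i < bs.toList.length),
        ∃ Γp, GPatEnv (inT i) (bs.toList.get ⟨i, hi⟩).1 Γp ∧ Gp i = TEnv.inter Γ Γp) →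
      (∀ i (hi : i < bs.toList.length),
        Subty (inT i) Ty.bot →
          outT i = Ty.bot ∧
          { x | x ∈ fvExpr (bs.toList.get ⟨i, hi⟩).2 } ⊆ SEnv.dom S ∪ TEnv.dom (Gp i)) →
      (∀ i (hi : i < bs.toList.length),
        ¬ Subty (inT i) Ty.bot → HasTy S (Gp i) (bs.toList.get ⟨i, hi⟩).2 (outT i)) →
      HasTy S Γ (.caseE e bs) (unionList ((List.range bs.toList.length).map outT))

/-- Typing of top-level definitions, `Σ ⊢ d`. -/
inductive DefOk (S : SEnv) : Defn → Prop where
  | plain : ∀ {x y e t},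
      S x = some ⟨[], t⟩ → HasTy S TEnv.empty (.abs y e) t → DefOk S (.plain x y e)
  | ann : ∀ {x σ y e} (arr : List (Ty × Ty)),
      S x = some σ →
      Scheme.fvars σ = ∅ →
      σ.ty = interList (arr.map (fun p => Ty.arrow p.1 p.2)) →
      (∀ p ∈ arr, HasTy S (TEnv.single y p.1) e p.2) →
      DefOk S (.ann x σ y e)

/-- Environments generated from a definition, `Envs(d) = ⟨Σ, Σ'⟩`. -/
inductive DefEnvs : Defn → SEnv → SEnv → Prop where
  | plain : ∀ {x y e} (t : Ty),
      DefEnvs (.plain x y e) (SEnv.single x ⟨[], t⟩) (SEnv.single x ⟨t.fvarsList, t⟩)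
  | ann : ∀ {x σ y e},
      ({ α | α ∈ σ.vars } : Set TyVar) = σ.ty.fvars →
      DefEnvs (.ann x σ y e) (SEnv.single x σ) (SEnv.single x σ)

/-- Program typing `⊢ P : t`. -/
def ProgTy (P : Program) (t : Ty) : Prop :=
  ∃ S₁ S₂ : Fin P.defs.length → SEnv,
    (∀ i, DefEnvs (P.defs.get i) (S₁ i) (S₂ i)) ∧
    (∀ i, DefOk (concatSEnvs (List.ofFn S₁)) (P.defs.get i)) ∧
    HasTy (concatSEnvs (List.ofFn S₂)) TEnv.empty P.main t

/-- The definition list `F` is in accordance with the scheme environment `Σ`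
(written `F ⋈ Σ`). -/
def Accord (F : List Defn) (S : SEnv) : Prop :=
  ∃ S₁ S₂ : Fin F.length → SEnv,
    (∀ i, DefEnvs (F.get i) (S₁ i) (S₂ i)) ∧
    (∀ i, DefOk (concatSEnvs (List.ofFn S₁)) (F.get i)) ∧
    S = concatSEnvs (List.ofFn S₂)

end MiniErl

namespace MiniErl

/-! ## Constraints -/

/-- Constraints: subtyping constraints, variable constraints, definition
constraints, conjunctions, and case constraints with per-branch
`unless` conditions. -/
inductive Constr where
  | subty : Ty → Ty → Constr
  | vsub  : Var → Ty → Constr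
  | cdef  : TEnv → Constr → Constr
  | cand  : Constr → Constr → Constr
  | ccase : Constr → List (TEnv × Constr × Constr) → Constr

/-- Program constraints `let C with Σ in C'`. -/
structure ProgConstr where
  defsC : Constr
  senv  : SEnv
  mainC : Constr

/-- Simple constraints: subtyping constraints, conjunctions, and disjunctions. -/
inductive SConstr where
  | subty : Ty → Ty → SConstr
  | sand  : SConstr → SConstr → SConstr
  | sor   : SConstr → SConstr → SConstr

/-- A type substitution solves a simple constraint. -/
def Solves (θ : TySubst) : SConstr → Prop
  | .subty t₁ t₂ => Subty (t₁.subst θ) (t₂.subst θ)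
  | .sand c₁ c₂ => Solves θ c₁ ∧ Solves θ c₂
  | .sor c₁ c₂ => Solves θ c₁ ∨ Solves θ c₂

/-- Free type variables of a simple constraint. -/
def SConstr.fvars : SConstr → Set TyVar
  | .subty t₁ t₂ => t₁.fvars ∪ t₂.fvars
  | .sand c₁ c₂ => c₁.fvars ∪ c₂.fvars
  | .sor c₁ c₂ => c₁.fvars ∪ c₂.fvars

/-- The trivially satisfied constraint. -/
def Constr.tt : Constr := .subty Ty.bot Ty.top
/-- The trivially satisfied simple constraint. -/
def SConstr.tt : SConstr := .subty Ty.bot Ty.top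

def andCList : List Constr → Constr
  | [] => Constr.tt
  | c :: cs => .cand c (andCList cs)

def andSList : List SConstr → SConstr
  | [] => SConstr.tt
  | c :: cs => .sand c (andSList cs)

/-- A constraint is simple when it is built from subtyping constraints and
conjunctions only; in this case it can be read as a simple constraint. -/
def Constr.toSimple? : Constr → Option SConstr
  | .subty t₁ t₂ => some (.subty t₁ t₂)
  | .cand C₁ C₂ =>
      match C₁.toSimple?, C₂.toSimple? with
      | some c₁, some c₂ => some (.sand c₁ c₂)
      | _, _ => none
  | _ => none

/-- Scoping constraints for the free variables of a guarded pattern. -/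
def scopeConstr (xs : List Var) : Constr :=
  andCList (xs.map (fun x => Constr.vsub x Ty.top))

/-! ## Constraint generation -/

/-- Environment and constraint generation for patterns. -/
inductive PatConstr : Ty → Pat → Constr → TEnv → Set TyVar → Prop where
  | val : ∀ {t v}, PatConstr t (.val v) Constr.tt TEnv.empty ∅
  | wild : ∀ {t}, PatConstr t .wild Constr.tt TEnv.empty ∅
  | capture : ∀ {t x}, PatConstr t (.capture x) Constr.tt TEnv.empty ∅
  | bind : ∀ {t x}, PatConstr t (.bind x) Constr.tt (TEnv.single x t) ∅
  | pair : ∀ {t p₁ p₂ α₁ α₂ C₁ C₂ Γ₁ Γ₂ A₁ A₂},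
      PatConstr (.tvar α₁) p₁ C₁ Γ₁ A₁ → PatConstr (.tvar α₂) p₂ C₂ Γ₂ A₂ →
      Disjoint A₁ A₂ → α₁ ∉ A₁ ∪ A₂ → α₂ ∉ A₁ ∪ A₂ → α₁ ≠ α₂ →
      PatConstr t (.pair p₁ p₂)
        (.cand (.cand C₁ C₂) (.subty t (.prod (.tvar α₁) (.tvar α₂))))
        (TEnv.inter Γ₁ Γ₂) (A₁ ∪ A₂ ∪ {α₁, α₂})

/-- Environment and constraint generation for guarded patterns. -/
inductive GPatConstr : Ty → GPat → Constr → TEnv → Set TyVar → Prop where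
  | mk : ∀ {t p g C Γ A},
      PatConstr t p C Γ A →
      GPatConstr t (.mk p g) (.cand C (scopeConstr (fvGPat (.mk p g))))
        (TEnv.inter Γ (Guard.env g)) A

/-- The per-branch triples (environment, body constraint, `unless` constraint)
of the constraint generated for a case expression. -/
noncomputable def caseBranchTriples (α : TyVar) (L : List (GPat × Expr))
    (Γi : ℕ → TEnv) (Di : ℕ → Constr) : List (TEnv × Constr × Constr) :=
  (List.range L.length).map (fun i =>
    (Γi i, Di i,
      Constr.subty (.tvar α)
        (.union (unionList ((L.take i).map (fun b => GPat.down b.1)))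
                (.neg (GPat.up (L.getD i default).1)))))

/-- Constraint generation for expressions, tracking the introduced fresh
type variables. -/
inductive ConstrGen : Expr → Ty → Constr → Set TyVar → Prop where
  | var : ∀ {x t}, ConstrGen (.var x) t (.vsub x t) ∅
  | const : ∀ {c t}, ConstrGen (.const c) t (.subty (tyOfConst c) t) ∅
  | abs : ∀ {x e t α β C A},
      ConstrGen e (.tvar β) C A → α ∉ A → β ∉ A → α ≠ β →
      ConstrGen (.abs x e) t
        (.cand (.cdef (TEnv.single x (.tvar α)) C)
               (.subty (.arrow (.tvar α) (.tvar β)) t))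
        (A ∪ {α, β})
  | app : ∀ {e₁ e₂ t α β C₁ C₂ A₁ A₂},
      ConstrGen e₁ (.arrow (.tvar α) (.tvar β)) C₁ A₁ →
      ConstrGen e₂ (.tvar α) C₂ A₂ →
      Disjoint A₁ A₂ → α ∉ A₁ ∪ A₂ → β ∉ A₁ ∪ A₂ → α ≠ β →
      ConstrGen (.app e₁ e₂) t (.cand (.cand C₁ C₂) (.subty (.tvar β) t))
        (A₁ ∪ A₂ ∪ {α, β})
  | pair : ∀ {e₁ e₂ t α₁ α₂ C₁ C₂ A₁ A₂},
      ConstrGen e₁ (.tvar α₁) C₁ A₁ → ConstrGen e₂ (.tvar α₂) C₂ A₂ →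
      Disjoint A₁ A₂ → α₁ ∉ A₁ ∪ A₂ → α₂ ∉ A₁ ∪ A₂ → α₁ ≠ α₂ →
      ConstrGen (.pair e₁ e₂) t
        (.cand (.cand C₁ C₂) (.subty (.prod (.tvar α₁) (.tvar α₂)) t))
        (A₁ ∪ A₂ ∪ {α₁, α₂})
  | hcase : ∀ {e : Expr} {bs : Branches} {t : Ty} {α β : TyVar} {C : Constr}
      {A' : Set TyVar} (Ci Di : ℕ → Constr) (Γi : ℕ → TEnv) (Ai Ai' : ℕ → Set TyVar),
      ConstrGen e (.tvar α) C A' →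
      (∀ i (hi : i < bs.toList.length),
        GPatConstr
          (Ty.inter
            (Ty.diff (.tvar α)
              (unionList ((bs.toList.take i).map (fun b => GPat.down b.1))))
            (GPat.up (bs.toList.get ⟨i, hi⟩).1))
          (bs.toList.get ⟨i, hi⟩).1 (Ci i) (Γi i) (Ai i)) →
      (∀ i (hi : i < bs.toList.length),
        ConstrGen (bs.toList.get ⟨i, hi⟩).2 (.tvar β) (Di i) (Ai' i)) →
      α ≠ β → α ∉ A' → β ∉ A' →
      (∀ i, i < bs.toList.length →
        α ∉ Ai i ∪ Ai' i ∧ β ∉ Ai i ∪ Ai' i ∧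
        Disjoint A' (Ai i ∪ Ai' i) ∧ Disjoint (Ai i) (Ai' i)) →
      (∀ i j, i < bs.toList.length → j < bs.toList.length → i ≠ j →
        Disjoint (Ai i ∪ Ai' i) (Ai j ∪ Ai' j)) →
      ConstrGen (.caseE e bs) t
        (.cand
          (.ccase
            (.cand
              (.cand C
                (.subty (.tvar α) (unionList (bs.toList.map (fun b => GPat.down b.1)))))
              (andCList ((List.range bs.toList.length).map Ci)))
            (caseBranchTriples α bs.toList Γi Di))
          (.subty (.tvar β) t))
        (A' ∪ {α, β} ∪ ⋃ i ∈ Finset.range bs.toList.length, (Ai i ∪ Ai' i))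

/-- Constraint generation for definitions. -/
inductive DefConstr : Defn → Constr → SEnv → Set TyVar → Prop where
  | plain : ∀ {x y e α C A},
      ConstrGen (.abs y e) (.tvar α) C A → α ∉ A →
      DefConstr (.plain x y e) C (SEnv.single x ⟨[], .tvar α⟩) (A ∪ {α})
  | ann : ∀ {x σ y e} (arr : List (Ty × Ty)) (Cs : ℕ → Constr) (Bs : ℕ → Set TyVar),
      Scheme.fvars σ = ∅ →
      σ.ty = interList (arr.map (fun p => Ty.arrow p.1 p.2)) →
      (∀ i (hi : i < arr.length), ConstrGen e (arr.get ⟨i, hi⟩).2 (Cs i) (Bs i)) →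
      (∀ i j, i < arr.length → j < arr.length → i ≠ j → Disjoint (Bs i) (Bs j)) →
      (∀ i, i < arr.length → Disjoint (Bs i) { a | a ∈ σ.vars }) →
      DefConstr (.ann x σ y e)
        (andCList ((List.range arr.length).map (fun i =>
          Constr.cdef (TEnv.single y (arr.getD i default).1) (Cs i))))
        (SEnv.single x σ)
        ({ a | a ∈ σ.vars } ∪ ⋃ i ∈ Finset.range arr.length, Bs i)

/-- Constraint generation for programs. -/
inductive ProgConstrGen : Program → Ty → ProgConstr → Prop where
  | mk : ∀ {P : Program} {t : Ty} {C' : Constr} {A' : Set TyVar}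
      (Cs : Fin P.defs.length → Constr) (Ss : Fin P.defs.length → SEnv)
      (As : Fin P.defs.length → Set TyVar),
      (∀ i, DefConstr (P.defs.get i) (Cs i) (Ss i) (As i)) →
      ConstrGen P.main t C' A' →
      ProgConstrGen P t ⟨andCList (List.ofFn Cs), concatSEnvs (List.ofFn Ss), C'⟩

/-! ## Constraint rewriting -/

/-- Constraint rewriting: turning a constraint into a simple constraint,
relative to a scheme environment and a type environment, tracking the fresh
type variables introduced by instantiating type schemes. -/
inductive ConstrRew (S : SEnv) : TEnv → Constr → SConstr → Set TyVar → Prop where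
  | cand : ∀ {Γ C₁ C₂ c₁ c₂ A₁ A₂},
      ConstrRew S Γ C₁ c₁ A₁ → ConstrRew S Γ C₂ c₂ A₂ → Disjoint A₁ A₂ →
      ConstrRew S Γ (.cand C₁ C₂) (.sand c₁ c₂) (A₁ ∪ A₂)
  | subty : ∀ {Γ t₁ t₂}, ConstrRew S Γ (.subty t₁ t₂) (.subty t₁ t₂) ∅
  | var : ∀ {Γ : TEnv} {x t t'},
      S x = none → Γ x = some t' →
      ConstrRew S Γ (.vsub x t) (.subty t' t) ∅
  | varPoly : ∀ {Γ : TEnv} {x t σ},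
      Γ x = none → S x = some σ →
      ConstrRew S Γ (.vsub x t) (.subty σ.ty t) { α | α ∈ σ.vars }
  | cdef : ∀ {Γ Γ' C c A},
      ConstrRew S (TEnv.append Γ Γ') C c A →
      ConstrRew S Γ (.cdef Γ' C) c A
  | ccase : ∀ {Γ C c A'} (l : List (TEnv × Constr × Constr))
      (hc bc : ℕ → SConstr) (hA bA : ℕ → Set TyVar),
      ConstrRew S Γ C c A' →
      (∀ i (hi : i < l.length), ConstrRew S Γ (l.get ⟨i, hi⟩).2.2 (hc i) (hA i)) →
      (∀ i (hi : i < l.length),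
        ConstrRew S (TEnv.inter Γ (l.get ⟨i, hi⟩).1) (l.get ⟨i, hi⟩).2.1 (bc i) (bA i)) →
      (∀ i, i < l.length → Disjoint A' (hA i ∪ bA i) ∧ Disjoint (hA i) (bA i)) →
      (∀ i j, i < l.length → j < l.length → i ≠ j →
        Disjoint (hA i ∪ bA i) (hA j ∪ bA j)) →
      ConstrRew S Γ (.ccase C l)
        (.sand c (andSList ((List.range l.length).map (fun i => SConstr.sor (hc i) (bc i)))))
        (A' ∪ ⋃ i ∈ Finset.range l.length, (hA i ∪ bA i))

/-- The equivalence constraint fixing a type substitution. -/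
def equivConstr (θ : TySubst) : SConstr :=
  andSList (θ.map (fun p =>
    SConstr.sand (.subty (.tvar p.1) p.2) (.subty p.2 (.tvar p.1))))

/-- Program constraint rewriting, relative to a tally algorithm: rewrite and
solve the constraint for the definitions with a chosen solution `θ*`,
generalize `Σθ*`, rewrite the main constraint under this environment, and
conjoin an equivalence constraint fixing `θ*`. -/
inductive ProgRew (tally : SConstr → Set TySubst) : ProgConstr → SConstr → Prop where
  | mk : ∀ {C : Constr} {Se : SEnv} {C' : Constr} {c c' : SConstr}
      {A A' : Set TyVar} {θs : TySubst},
      ConstrRew Se TEnv.empty C c A →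
      θs ∈ tally c →
      ConstrRew (SEnv.gen (Se.subst θs)) TEnv.empty C' c' A' →
      ProgRew tally ⟨C, Se, C'⟩ (.sand (equivConstr θs) c')

end MiniErl

namespace MiniErl

/-! ### Auxiliary development for progress -/

/-- A canonical element of the denotation of a value. -/
def vd : Expr → Dom
  | .const c => .const c
  | .pair e₁ e₂ => .pair (vd e₁) (vd e₂)
  | _ => .fn []

lemma den_inter (η : TyVar → Set Dom) (t₁ t₂ : Ty) :
    den η (Ty.inter t₁ t₂) = den η t₁ ∩ den η t₂ := by
  simp [Ty.inter, den, Set.compl_union, compl_compl]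

lemma den_bot (η : TyVar → Set Dom) : den η Ty.bot = ∅ := by
  rw [Ty.bot, den_inter]
  ext d
  simp only [den, Set.mem_inter_iff, Set.mem_setOf_eq, Set.mem_empty_iff_false, iff_false]
  rintro ⟨⟨n, rfl⟩, ⟨m, hm⟩⟩
  cases hm

lemma den_top (η : TyVar → Set Dom) : den η Ty.top = Set.univ := by
  rw [Ty.top]
  show (den η Ty.bot)ᶜ = _
  rw [den_bot]; simp

lemma not_mem_den_bot {η : TyVar → Set Dom} {d : Dom} (h : d ∈ den η Ty.bot) : False := by
  rw [den_bot] at h; exact h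

lemma subty_refl (t : Ty) : Subty t t := fun _ => subset_rfl

lemma subty_inter_left (a b : Ty) : Subty (Ty.inter a b) a := by
  intro η
  rw [den_inter]
  exact Set.inter_subset_left

/-- Typed values denote: `vd v` belongs to the denotation of any of their types. -/
lemma vd_ty {S : SEnv} : ∀ {Γ e t}, HasTy S Γ e t → IsValue e → ∀ η, vd e ∈ den η t := by
  intro Γ e t ht
  induction ht with
  | var _ _ => intro hv; cases hv
  | varPoly _ _ _ => intro hv; cases hv
  | const =>
    rename_i c
    intro _ η
    cases c <;> simp [vd, den, tyOfConst]
  | abs _ _ =>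
    intro _ η
    refine ⟨[], rfl, by simp⟩
  | app _ _ _ _ => intro hv; cases hv
  | pair _ _ ih₁ ih₂ =>
    intro hv η
    cases hv with
    | pair h₁ h₂ => exact ⟨_, _, rfl, ih₁ h₁ η, ih₂ h₂ η⟩
  | sub _ hs ih => exact fun hv η => hs η (ih hv η)
  | hcase _ _ _ _ _ _ _ _ _ _ _ _ => intro hv; cases hv

lemma mem_unionList {η : TyVar → Set Dom} {d : Dom} :
    ∀ l : List Ty, d ∈ den η (unionList l) → ∃ u ∈ l, d ∈ den η u := by
  intro l
  induction l with
  | nil => intro h; exact (not_mem_den_bot (show d ∈ den η Ty.bot from h)).elim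
  | cons t ts ih =>
    intro h
    rcases (h : d ∈ den η t ∪ den η (unionList ts)) with h | h
    · exact ⟨t, by simp, h⟩
    · obtain ⟨u, hu, hd⟩ := ih h
      exact ⟨u, by simp [hu], hd⟩

/-! #### Value substitution lookup lemmas -/

lemma vfind_nil (x : Var) : VSubst.find [] x = none := rfl

lemma vfind_cons (a : Var × Expr) (l : VSubst) (x : Var) :
    VSubst.find (a :: l) x = if a.1 = x then some a.2 else VSubst.find l x := by
  by_cases h : a.1 = x <;> simp [VSubst.find, List.find?_cons, h]

lemma vfind_append (l₁ l₂ : VSubst) (x : Var) :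
    VSubst.find (l₁ ++ l₂) x =
      ((VSubst.find l₁ x).rec (VSubst.find l₂ x) (fun w => some w)) := by
  induction l₁ with
  | nil => simp [vfind_nil]
  | cons a l ih =>
    rw [List.cons_append, vfind_cons, vfind_cons]
    by_cases h : a.1 = x <;> simp [h, ih]

lemma mem_keys_of_find {ς : VSubst} {x : Var} {w : Expr}
    (h : VSubst.find ς x = some w) : x ∈ ς.map Prod.fst := by
  induction ς with
  | nil => simp [vfind_nil] at h
  | cons a l ih =>
    rw [vfind_cons] at h
    by_cases hx : a.1 = x
    · simp [hx.symm]
    · rw [if_neg hx] at h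
      simp [ih h]

lemma find_isSome_of_mem_keys {ς : VSubst} {x : Var}
    (h : x ∈ ς.map Prod.fst) : (VSubst.find ς x).isSome := by
  induction ς with
  | nil => simp at h
  | cons a l ih =>
    rw [vfind_cons]
    by_cases hx : a.1 = x
    · simp [hx]
    · rw [if_neg hx]
      apply ih
      rcases List.mem_cons.mp h with h | h
      · exact absurd h.symm (by simpa using hx)
      · simpa using h

/-! #### Totality of matching -/

theorem matchP_total (F : List Defn) (p : Pat) (v : Expr)
    (h : ∀ x, x ∈ fvPat p → (lookupF F x).isSome) : ∃ r, MatchP F v p r := by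
  match p with
  | .val w =>
    by_cases hvw : v = w
    · subst hvw; exact ⟨some [], MatchP.valEq⟩
    · exact ⟨none, MatchP.valNe hvw⟩
  | .wild => exact ⟨some [], MatchP.wild⟩
  | .bind x => exact ⟨some [(x, v)], MatchP.bind⟩
  | .capture x =>
    have hx : (lookupF F x).isSome := h x (by simp [fvPat])
    obtain ⟨w, hw⟩ := Option.isSome_iff_exists.mp hx
    by_cases hvw : v = w
    · subst hvw; exact ⟨some [], MatchP.capture hw MatchP.valEq⟩
    · exact ⟨none, MatchP.capture hw (MatchP.valNe hvw)⟩
  | .pair p₁ p₂ =>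
    by_cases hp : ∃ v₁ v₂, v = .pair v₁ v₂
    · obtain ⟨v₁, v₂, rfl⟩ := hp
      obtain ⟨r₁, h₁⟩ := matchP_total F p₁ v₁ (fun x hx => h x (by simp [fvPat, hx]))
      obtain ⟨r₂, h₂⟩ := matchP_total F p₂ v₂ (fun x hx => h x (by simp [fvPat, hx]))
      match r₁, h₁ with
      | none, h₁ => exact ⟨none, MatchP.pairFail₁ h₁⟩
      | some ς₁, h₁ =>
        match r₂, h₂ with
        | none, h₂ => exact ⟨none, MatchP.pairFail₂ h₂⟩
        | some ς₂, h₂ =>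
          by_cases hA : VSubst.Agree ς₁ ς₂
          · exact ⟨some (ς₁ ++ ς₂), MatchP.pairSome h₁ h₂ hA⟩
          · exact ⟨none, MatchP.pairDisagree h₁ h₂ hA⟩
    · push_neg at hp
      exact ⟨none, MatchP.pairNotPair hp⟩

theorem evalGuard_total (F : List Defn) (g : Guard) : ∃ b, EvalGuard F g b := by
  match g with
  | .isVar gt x =>
    by_cases h : ∃ v, lookupF F x = some v ∧ ValMatches v gt
    · obtain ⟨v, hv, hm⟩ := h
      exact ⟨true, EvalGuard.isVarT hv hm⟩
    · push_neg at h
      exact ⟨false, EvalGuard.isVarF h⟩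
  | .isVal gt v =>
    by_cases h : ValMatches v gt
    · exact ⟨true, EvalGuard.isValT h⟩
    · exact ⟨false, EvalGuard.isValF h⟩
  | .oracle => exact ⟨true, EvalGuard.oracle true⟩
  | .tru => exact ⟨true, EvalGuard.tru⟩
  | .and g₁ g₂ =>
    obtain ⟨b₁, h₁⟩ := evalGuard_total F g₁
    obtain ⟨b₂, h₂⟩ := evalGuard_total F g₂
    exact ⟨b₁ && b₂, EvalGuard.and h₁ h₂⟩

theorem matchG_total (F : List Defn) (pg : GPat) (v : Expr)
    (h : ∀ x, x ∈ fvPat pg.pat → (lookupF F x).isSome) : ∃ r, MatchG F v pg r := by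
  obtain ⟨p, g⟩ := pg
  obtain ⟨r, hr⟩ := matchP_total F p v h
  match r, hr with
  | none, hr => exact ⟨none, MatchG.patFail hr⟩
  | some ς, hr =>
    obtain ⟨b, hb⟩ := evalGuard_total F (substGuard g ς)
    cases b with
    | false => exact ⟨none, MatchG.guardFalse hr hb⟩
    | true => exact ⟨some ς, MatchG.guardTrue hr hb⟩

/-! #### Soundness of accepting types -/

lemma valMatches_of_den {w : Expr} (hw : IsValue w) (gt : GuardTy) (η : TyVar → Set Dom)
    (h : vd w ∈ den η gt.toTy) : ValMatches w gt := by
  cases gt with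
  | int =>
    cases hw with
    | @const c =>
      obtain ⟨n, hn⟩ : ∃ n, Dom.const c = Dom.const (.int n) := h
      cases hn; exact ValMatches.int
    | abs => obtain ⟨n, hn⟩ : ∃ n, Dom.fn [] = Dom.const (.int n) := h; cases hn
    | pair _ _ => obtain ⟨n, hn⟩ : ∃ n, Dom.pair _ _ = Dom.const (.int n) := h; cases hn
  | float =>
    cases hw with
    | @const c =>
      obtain ⟨n, hn⟩ : ∃ n, Dom.const c = Dom.const (.float n) := h
      cases hn; exact ValMatches.float
    | abs => obtain ⟨n, hn⟩ : ∃ n, Dom.fn [] = Dom.const (.float n) := h; cases hn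
    | pair _ _ => obtain ⟨n, hn⟩ : ∃ n, Dom.pair _ _ = Dom.const (.float n) := h; cases hn
  | anyPair =>
    obtain ⟨d₁, d₂, hd, -, -⟩ :
        ∃ d₁ d₂, vd w = Dom.pair d₁ d₂ ∧ d₁ ∈ den η Ty.top ∧ d₂ ∈ den η Ty.top := h
    cases hw with
    | const => cases hd
    | abs => cases hd
    | pair _ _ => exact ValMatches.pair
  | anyFun =>
    obtain ⟨R, hR, -⟩ : ∃ R, vd w = Dom.fn R ∧ _ := h
    cases hw with
    | const => cases hR
    | abs => exact ValMatches.fn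
    | pair _ _ => cases hR

lemma valMatches_subst {v : Expr} {gt : GuardTy} (h : ValMatches v gt) (ς : VSubst) :
    ValMatches (substExpr v ς) gt := by
  cases h with
  | int => exact ValMatches.int
  | float => exact ValMatches.float
  | pair => exact ValMatches.pair
  | fn => exact ValMatches.fn

theorem matchDown (F : List Defn) (η : TyVar → Set Dom) (Γ : TEnv) :
    ∀ (p : Pat) (v : Expr), IsValue v → vd v ∈ den η (patDown Γ p) → p.bound.Nodup →
    ∃ ς : VSubst, MatchP F v p (some ς) ∧ ς.map Prod.fst = p.bound ∧
      ∀ x w, VSubst.find ς x = some w →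
        IsValue w ∧ ∀ t, Γ x = some t → vd w ∈ den η t := by
  intro p
  match p with
  | .val e =>
    intro v hv hd _
    match e with
    | .const (.int n) =>
      have hvd : vd v = Dom.const (.int n) := hd
      have hveq : v = .const (.int n) := by
        cases hv with
        | @const c => cases hvd; rfl
        | abs => cases hvd
        | pair _ _ => cases hvd
      subst hveq
      exact ⟨[], MatchP.valEq, rfl, fun x w h => by simp [vfind_nil] at h⟩
    | .const (.float f) => exact (not_mem_den_bot (show vd v ∈ den η Ty.bot from hd)).elim
    | .var y => exact (not_mem_den_bot (show vd v ∈ den η Ty.bot from hd)).elim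
    | .abs y b => exact (not_mem_den_bot (show vd v ∈ den η Ty.bot from hd)).elim
    | .app a b => exact (not_mem_den_bot (show vd v ∈ den η Ty.bot from hd)).elim
    | .pair a b => exact (not_mem_den_bot (show vd v ∈ den η Ty.bot from hd)).elim
    | .caseE a b => exact (not_mem_den_bot (show vd v ∈ den η Ty.bot from hd)).elim
  | .wild =>
    intro v hv _ _
    exact ⟨[], MatchP.wild, rfl, fun x w h => by simp [vfind_nil] at h⟩
  | .capture x =>
    intro v _ hd _
    exact (not_mem_den_bot (show vd v ∈ den η Ty.bot from hd)).elim
  | .bind x =>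
    intro v hv hd _
    refine ⟨[(x, v)], MatchP.bind, rfl, ?_⟩
    intro y w hw
    rw [vfind_cons] at hw
    split at hw
    · rename_i hxy
      cases hw
      refine ⟨hv, fun t ht => ?_⟩
      subst hxy
      have : patDown Γ (.bind x) = (Γ x).getD Ty.top := rfl
      rw [this, ht] at hd
      exact hd
    · simp [vfind_nil] at hw
  | .pair p₁ p₂ =>
    intro v hv hd hnd
    obtain ⟨d₁, d₂, hvd, h₁, h₂⟩ :
        ∃ d₁ d₂, vd v = Dom.pair d₁ d₂ ∧
          d₁ ∈ den η (patDown Γ p₁) ∧ d₂ ∈ den η (patDown Γ p₂) := hd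
    cases hv with
    | const => cases hvd
    | abs => cases hvd
    | @pair v₁ v₂ hv₁ hv₂ =>
      have hvd' : Dom.pair (vd v₁) (vd v₂) = Dom.pair d₁ d₂ := hvd
      cases hvd'
      have hnd' : (Pat.bound p₁).Nodup ∧ (Pat.bound p₂).Nodup ∧
          (Pat.bound p₁).Disjoint (Pat.bound p₂) := by
        rw [show Pat.bound (.pair p₁ p₂) = p₁.bound ++ p₂.bound from rfl,
          List.nodup_append] at hnd
        refine ⟨hnd.1, hnd.2.1, ?_⟩
        intro a ha hb
        exact hnd.2.2 a ha a hb rfl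
      obtain ⟨ς₁, hm₁, hk₁, hp₁⟩ := matchDown F η Γ p₁ v₁ hv₁ h₁ hnd'.1
      obtain ⟨ς₂, hm₂, hk₂, hp₂⟩ := matchDown F η Γ p₂ v₂ hv₂ h₂ hnd'.2.1
      have hAg : VSubst.Agree ς₁ ς₂ := by
        intro x w₁ w₂ hf₁ hf₂
        exact absurd (hk₂ ▸ mem_keys_of_find hf₂)
          (hnd'.2.2 (hk₁ ▸ mem_keys_of_find hf₁))
      refine ⟨ς₁ ++ ς₂, MatchP.pairSome hm₁ hm₂ hAg, ?_, ?_⟩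
      · show List.map Prod.fst (ς₁ ++ ς₂) = p₁.bound ++ p₂.bound
        rw [List.map_append, hk₁, hk₂]
      · intro x w hw
        rw [vfind_append] at hw
        cases hf : VSubst.find ς₁ x with
        | some w' => rw [hf] at hw; cases hw; exact hp₁ x _ hf
        | none => rw [hf] at hw; exact hp₂ x w hw

theorem guard_eval_true (F : List Defn) (η : TyVar → Set Dom) (ς : VSubst) (Γg : TEnv)
    (X : Set Var)
    (Hς : ∀ x w, VSubst.find ς x = some w →
      IsValue w ∧ ∀ t, Γg x = some t → vd w ∈ den η t)
    (HX : ∀ x, x ∈ X → (VSubst.find ς x).isSome) :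
    ∀ g : Guard, Guard.safeDown X g →
      (∀ x t', Guard.env g x = some t' → ∃ t, Γg x = some t ∧ Subty t t') →
      EvalGuard F (substGuard g ς) true := by
  intro g
  match g with
  | .isVar gt x =>
    intro hs henv
    have hx := HX x hs
    obtain ⟨w, hw⟩ := Option.isSome_iff_exists.mp hx
    obtain ⟨t, ht, hsub⟩ := henv x gt.toTy (by simp [Guard.env, TEnv.single])
    obtain ⟨hwval, hden⟩ := Hς x w hw
    have hm := valMatches_of_den hwval gt η (hsub η (hden t ht))
    rw [show substGuard (.isVar gt x) ς =
      (match VSubst.find ς x with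
       | some v => Guard.isVal gt v
       | none => Guard.isVar gt x) from rfl, hw]
    exact EvalGuard.isValT hm
  | .isVal gt w =>
    intro hs _
    exact EvalGuard.isValT (valMatches_subst hs ς)
  | .oracle => intro hs; exact absurd hs (by simp [Guard.safeDown])
  | .tru => intro _ _; exact EvalGuard.tru
  | .and g₁ g₂ =>
    intro hs henv
    have hprop : ∀ x t₁' t₂', Guard.env g₁ x = some t₁' ∨ Guard.env g₂ x = some t₂' →
        True := fun _ _ _ _ => trivial
    have henv₁ : ∀ x t', Guard.env g₁ x = some t' → ∃ t, Γg x = some t ∧ Subty t t' := by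
      intro x t' h₁
      cases h₂ : Guard.env g₂ x with
      | some t₂ =>
        obtain ⟨t, ht, hsub⟩ := henv x (Ty.inter t' t₂)
          (by simp [Guard.env, TEnv.inter, h₁, h₂])
        exact ⟨t, ht, fun η' => (hsub η').trans (subty_inter_left t' t₂ η')⟩
      | none =>
        exact henv x t' (by simp [Guard.env, TEnv.inter, h₁, h₂])
    have henv₂ : ∀ x t', Guard.env g₂ x = some t' → ∃ t, Γg x = some t ∧ Subty t t' := by
      intro x t' h₂
      cases h₁ : Guard.env g₁ x with
      | some t₁ =>
        obtain ⟨t, ht, hsub⟩ := henv x (Ty.inter t₁ t')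
          (by simp [Guard.env, TEnv.inter, h₁, h₂])
        refine ⟨t, ht, fun η' d hd => ?_⟩
        have := hsub η' hd
        rw [den_inter] at this
        exact this.2
      | none =>
        exact henv x t' (by simp [Guard.env, TEnv.inter, h₁, h₂])
    have e₁ := guard_eval_true F η ς Γg X Hς HX g₁ hs.1 henv₁
    have e₂ := guard_eval_true F η ς Γg X Hς HX g₂ hs.2 henv₂
    have := EvalGuard.and e₁ e₂
    simpa [substGuard] using this

theorem down_match (F : List Defn) (η : TyVar → Set Dom) (pg : GPat) (v : Expr)
    (hv : IsValue v) (hd : vd v ∈ den η (GPat.down pg)) :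
    ∃ ς, MatchG F v pg (some ς) := by
  obtain ⟨p, g⟩ := pg
  rw [GPat.down] at hd
  split at hd
  · rename_i h
    obtain ⟨hsafe, hok, hnd⟩ := h
    obtain ⟨ς, hm, hkeys, hprop⟩ := matchDown F η (Guard.env g) p v hv hd hnd
    have HX : ∀ x, x ∈ {x | x ∈ p.bound} → (VSubst.find ς x).isSome := by
      intro x hx
      exact find_isSome_of_mem_keys (by rw [hkeys]; exact hx)
    have hg := guard_eval_true F η ς (Guard.env g) _ hprop HX g hsafe
      (fun x t' h => ⟨t', h, subty_refl t'⟩)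
    exact ⟨ς, MatchG.guardTrue hm hg⟩
  · exact (not_mem_den_bot hd).elim

/-! #### Case reduction -/

theorem caseRed_total (F : List Defn) (v : Expr) :
    ∀ bs : Branches,
      (∀ pg e', (pg, e') ∈ bs.toList → ∃ r, MatchG F v pg r) →
      (∃ pg e', (pg, e') ∈ bs.toList ∧ ∃ ς, MatchG F v pg (some ς)) →
      ∃ e', CaseRed F v bs e' := by
  intro bs
  match bs with
  | .nil =>
    rintro _ ⟨pg, e', hmem, _⟩
    simp [Branches.toList] at hmem
  | .cons pg e bs' =>
    intro htot hex
    by_cases h : ∃ ς, MatchG F v pg (some ς)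
    · obtain ⟨ς, hς⟩ := h
      exact ⟨substExpr e ς, CaseRed.here hς⟩
    · obtain ⟨r, hr⟩ := htot pg e (by simp [Branches.toList])
      match r, hr with
      | some ς, hr => exact absurd ⟨ς, hr⟩ h
      | none, hr =>
        obtain ⟨pg', e'', hmem, ς, hς⟩ := hex
        have hmem2 : (pg' = pg ∧ e'' = e) ∨ (pg', e'') ∈ bs'.toList := by
          simpa [Branches.toList] using hmem
        have hmem' : (pg', e'') ∈ bs'.toList := by
          rcases hmem2 with ⟨rfl, rfl⟩ | h'
          · exact absurd ⟨ς, hς⟩ h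
          · exact h'
        obtain ⟨e₀, hcr⟩ := caseRed_total F v bs'
          (fun pg₀ e₀ hm => htot pg₀ e₀ (by simp [Branches.toList, hm]))
          ⟨pg', e'', hmem', ς, hς⟩
        exact ⟨e₀, CaseRed.there hr hcr⟩

/-! #### Accordance gives lookup -/

lemma concat_isSome : ∀ (l : List SEnv) (acc : SEnv) (x : Var),
    ((l.foldl SEnv.append acc) x).isSome →
    (acc x).isSome ∨ ∃ Si ∈ l, (Si x).isSome := by
  intro l
  induction l with
  | nil => intro acc x h; exact Or.inl h
  | cons s l ih =>
    intro acc x h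
    rcases ih (SEnv.append acc s) x h with h | ⟨Si, hmem, hs⟩
    · cases hs' : s x with
      | some σ => exact Or.inr ⟨s, by simp, by simp [hs']⟩
      | none =>
        left
        simpa [SEnv.append, hs'] using h
    · exact Or.inr ⟨Si, by simp [hmem], hs⟩

lemma accord_lookup {F : List Defn} {S : SEnv} (hacc : Accord F S) :
    ∀ x, (S x).isSome → (lookupF F x).isSome := by
  obtain ⟨S₁, S₂, hEnv, _, rfl⟩ := hacc
  intro x hx
  rcases concat_isSome (List.ofFn S₂) SEnv.empty x hx with h | ⟨Si, hmem, hs⟩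
  · exact Bool.noConfusion h
  · obtain ⟨i, rfl⟩ := List.mem_ofFn.mp hmem
    have hd := hEnv i
    have hs' : ((S₂ i) x).isSome := hs
    obtain ⟨dd, hdef⟩ : ∃ dd, F.get i = dd := ⟨_, rfl⟩
    obtain ⟨A, hA⟩ : ∃ A, S₁ i = A := ⟨_, rfl⟩
    obtain ⟨B, hB⟩ : ∃ B, S₂ i = B := ⟨_, rfl⟩
    rw [hdef, hA, hB] at hd
    rw [hB] at hs'
    have hnm : dd.name = x := by
      cases hd with
      | plain t =>
        rename_i n y0 e0
        show n = x
        by_cases hxx : x = n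
        · exact hxx.symm
        · exfalso
          have hnone : (SEnv.single n ⟨t.fvarsList, t⟩) x = none := if_neg hxx
          rw [hnone] at hs'
          exact Bool.noConfusion hs'
      | ann hfv0 =>
        rename_i n σ0 y0 e0
        show n = x
        by_cases hxx : x = n
        · exact hxx.symm
        · exfalso
          have hnone : (SEnv.single n σ0) x = none := if_neg hxx
          rw [hnone] at hs'
          exact Bool.noConfusion hs'
    have hmemF : dd ∈ F := by
      rw [← hdef]
      exact List.get_mem F i
    have hds : (F.find? (fun d => d.name == x)).isSome := by
      rw [List.find?_isSome]
      exact ⟨dd, hmemF, by simp [hnm]⟩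
    show ((F.find? (fun d => d.name == x)).map Defn.lam).isSome
    cases hfind : F.find? (fun d => d.name == x) with
    | none => rw [hfind] at hds; exact Bool.noConfusion hds
    | some d0 => rfl

/-! #### Main auxiliary progress theorem -/

theorem progress_aux {S : SEnv} {F : List Defn}
    (hF : ∀ x, (S x).isSome → (lookupF F x).isSome) :
    ∀ {Γ e t}, HasTy S Γ e t → (∀ x, Γ x = none) →
      IsValue e ∨ ∃ e', Step F e e' := by
  intro Γ e t ht
  induction ht with
  | var hx _ =>
    intro hΓ
    rw [hΓ] at hx
    cases hx
  | @varPoly Γ x σ t hσ hΓx hinst =>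
    intro _
    right
    have h := hF x (by rw [hσ]; rfl)
    obtain ⟨v, hv⟩ := Option.isSome_iff_exists.mp h
    exact ⟨v, Step.var hv⟩
  | const => exact fun _ => Or.inl IsValue.const
  | abs _ _ => exact fun _ => Or.inl IsValue.abs
  | app h₁ h₂ ih₁ ih₂ =>
    intro hΓ
    right
    rcases ih₁ hΓ with hv₁ | ⟨e₁', hs⟩
    · rcases ih₂ hΓ with hv₂ | ⟨e₂', hs⟩
      · have hd := vd_ty h₁ hv₁ (fun _ => ∅)
        cases hv₁ with
        | const =>
          obtain ⟨R, hR, -⟩ : ∃ R, vd (.const _) = Dom.fn R ∧ _ := hd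
          cases hR
        | pair _ _ =>
          obtain ⟨R, hR, -⟩ : ∃ R, vd (.pair _ _) = Dom.fn R ∧ _ := hd
          cases hR
        | abs => exact ⟨_, Step.beta hv₂⟩
      · exact ⟨_, Step.appR hv₁ hs⟩
    · exact ⟨_, Step.appL hs⟩
  | pair h₁ h₂ ih₁ ih₂ =>
    intro hΓ
    rcases ih₁ hΓ with hv₁ | ⟨e₁', hs⟩
    · rcases ih₂ hΓ with hv₂ | ⟨e₂', hs⟩
      · exact Or.inl (IsValue.pair hv₁ hv₂)
      · exact Or.inr ⟨_, Step.pairR hv₁ hs⟩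
    · exact Or.inr ⟨_, Step.pairL hs⟩
  | sub _ _ ih => exact fun hΓ => ih hΓ
  | @hcase Γ e bs t inT outT Gp hty hsub hfv hinT hGp hout hbody ihe ihb =>
    intro hΓ
    right
    rcases ihe hΓ with hv | ⟨e', hs⟩
    · have hd : vd e ∈ den (fun _ => (∅ : Set Dom))
          (unionList (bs.toList.map fun b => GPat.down b.1)) :=
        hsub _ (vd_ty hty hv _)
      obtain ⟨u, hu, hdu⟩ := mem_unionList _ hd
      obtain ⟨b, hb, rfl⟩ := List.mem_map.mp hu
      obtain ⟨ς, hς⟩ := down_match F _ b.1 e hv hdu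
      have htot : ∀ pg e', (pg, e') ∈ bs.toList → ∃ r, MatchG F e pg r := by
        intro pg e' hmem
        apply matchG_total
        intro x hx
        obtain ⟨i, hget⟩ := List.mem_iff_get.mp hmem
        have hx' : x ∈ {x | x ∈ fvGPat (bs.toList.get i).1} := by
          rw [hget]
          obtain ⟨p, g⟩ := pg
          show x ∈ fvGPat (GPat.mk p g)
          exact List.mem_append_left _ hx
        rcases hfv i.1 i.2 hx' with hS | hG
        · exact hF x hS
        · exact absurd (show (Γ x).isSome from hG) (by simp [hΓ x])
      obtain ⟨e'', hcr⟩ := caseRed_total F e bs htot ⟨b.1, b.2, hb, ς, hς⟩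
      exact ⟨e'', Step.caseMatch hv hcr⟩
    · exact ⟨_, Step.caseScrut hs⟩

/-- **Progress for expressions.** If `Σ; ∅ ⊢ e : t` and the definition list
`F` is in accordance with `Σ` (written `F ⋈ Σ`), then either `e` is a value or
`e` takes a reduction step under `F`. -/
theorem progress_for_expressions (S : SEnv) (F : List Defn) (e : Expr) (t : Ty)
    (ht : HasTy S TEnv.empty e t) (hacc : Accord F S) :
    IsValue e ∨ ∃ e' : Expr, Step F e e' :=
  progress_aux (accord_lookup hacc) ht (fun _ => rfl)

end MiniErl
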